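/- Let k be a field, G a finite group, R a fully G-graded k-algebra, H a subgroup of G, and g, h ∈ G. Write ʰH := hHh⁻¹ and ᵍʰH := (gh)H(gh)⁻¹. Then the map induced by multiplication in R gives an isomorphism R_{[g(ʰH)]} ⊗_{R_{[ʰH]}} R_{[hH]} ≅ R_{[ghH]} of R_{[ᵍʰH]}–R_H-bimodules; in particular the k-linear map r₁ ⊗ r₂ ↦ r₁r₂ from R_{[g(ʰH)]} ⊗_{R_{[ʰH]}} R_{[hH]} to R_{[ghH]} is bijective. -/

import Mathlib

/-!
Formalization of statements about fully group-graded algebras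
(Coconeț–Todea, "Hochschild cohomology of fully group-graded algebras as Mackey functor").
-/

set_option linter.unusedSectionVars false

open scoped Pointwise TensorProduct

/-- A fully (= strongly) `G`-graded `k`-algebra structure on `R`: a family of `k`-subspaces
`𝒜 g` (`g ∈ G`) giving an internal direct sum decomposition `R = ⊕_{g ∈ G} R_g`, with the
unit of `R` lying in the identity component, and satisfying `R_g · R_h = R_{gh}` for all
`g, h ∈ G`. -/
structure IsFullyGraded {k G R : Type*} [Field k] [Group G] [DecidableEq G]
    [Ring R] [Algebra k R] (𝒜 : G → Submodule k R) : Prop where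
  internal : DirectSum.IsInternal 𝒜
  one_mem : (1 : R) ∈ 𝒜 1
  mul_eq : ∀ g h : G, 𝒜 g * 𝒜 h = 𝒜 (g * h)

variable {k G R : Type*} [Field k] [Group G] [DecidableEq G] [Ring R] [Algebra k R]

/-- For a subset `S ⊆ G`, the `k`-subspace `R_{[S]} = ⊕_{s ∈ S} R_s` of `R`. -/
def gradedPart (𝒜 : G → Submodule k R) (S : Set G) : Submodule k R :=
  ⨆ s : S, 𝒜 (s : G)

theorem le_gradedPart (𝒜 : G → Submodule k R) {S : Set G} {s : G} (hs : s ∈ S) :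
    𝒜 s ≤ gradedPart 𝒜 S :=
  le_iSup (fun t : S => 𝒜 (t : G)) ⟨s, hs⟩

theorem gradedPart_mono (𝒜 : G → Submodule k R) {S T : Set G} (hST : S ⊆ T) :
    gradedPart 𝒜 S ≤ gradedPart 𝒜 T :=
  iSup_le fun s => le_gradedPart 𝒜 (hST s.2)

theorem gradedPart_mul_le (𝒜 : G → Submodule k R)
    (hmul : ∀ g h : G, 𝒜 g * 𝒜 h ≤ 𝒜 (g * h)) (S T : Set G) :
    gradedPart 𝒜 S * gradedPart 𝒜 T ≤ gradedPart 𝒜 (S * T) := by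
  rw [gradedPart, Submodule.iSup_mul]
  refine iSup_le fun s => ?_
  rw [gradedPart, Submodule.mul_iSup]
  refine iSup_le fun t => ?_
  exact le_trans (hmul s t) (le_gradedPart 𝒜 (Set.mul_mem_mul s.2 t.2))

/-- The conjugate subgroup `ᵍH = g H g⁻¹` (an element `x` lies in it iff `g⁻¹ x g ∈ H`). -/
def conjSubgroup (g : G) (H : Subgroup G) : Subgroup G where
  carrier := {x : G | g⁻¹ * x * g ∈ H}
  one_mem' := by simp [H.one_mem]
  mul_mem' {a b} ha hb := by
    have h1 : (g⁻¹ * a * g) * (g⁻¹ * b * g) ∈ H := H.mul_mem ha hb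
    rwa [show (g⁻¹ * a * g) * (g⁻¹ * b * g) = g⁻¹ * (a * b) * g by group] at h1
  inv_mem' {a} ha := by
    have h1 : (g⁻¹ * a * g)⁻¹ ∈ H := H.inv_mem ha
    rwa [show (g⁻¹ * a * g)⁻¹ = g⁻¹ * a⁻¹ * g by group] at h1

theorem mem_conjSubgroup (g : G) (H : Subgroup G) (x : G) :
    x ∈ conjSubgroup g H ↔ g⁻¹ * x * g ∈ H := Iff.rfl

theorem conjSubgroup_coe (g : G) (H : Subgroup G) :
    (conjSubgroup g H : Set G) = {g} * (H : Set G) * {g⁻¹} := by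
  ext x
  simp only [SetLike.mem_coe, mem_conjSubgroup, Set.mem_mul, Set.mem_singleton_iff]
  constructor
  · intro hx
    refine ⟨g * (g⁻¹ * x * g), ⟨g, rfl, g⁻¹ * x * g, hx, rfl⟩, g⁻¹, rfl, by group⟩
  · rintro ⟨y, ⟨a, ha, b, hb, hy⟩, c, hc, hx⟩
    rw [← hx, ← hy, ha, hc]
    have h2 : g⁻¹ * (g * b * g⁻¹) * g = b := by group
    rwa [h2]

/-- The `k`-linear map `↥A ⊗[k] ↥B → R` induced by multiplication in `R`. -/
noncomputable def mulTensor (A B : Submodule k R) : (↥A ⊗[k] ↥B) →ₗ[k] R :=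
  TensorProduct.lift
    (LinearMap.mk₂ k (fun (a : ↥A) (b : ↥B) => (a : R) * (b : R))
      (fun a₁ a₂ b => by simp [add_mul])
      (fun c a b => by simp [smul_mul_assoc])
      (fun a b₁ b₂ => by simp [mul_add])
      (fun c a b => by simp [mul_smul_comm]))

@[simp] theorem mulTensor_tmul (A B : Submodule k R) (a : ↥A) (b : ↥B) :
    mulTensor A B (a ⊗ₜ[k] b) = (a : R) * (b : R) := rfl

/-- The `k`-submodule of `↥A ⊗[k] ↥B` spanned by the balancedness relations over a middle
`k`-submodule `D` of `R` (with `D` acting by multiplication in `R`): the corresponding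
quotient is the balanced tensor product `A ⊗_D B`. -/
noncomputable def balancedRel (A B D : Submodule k R) : Submodule k (↥A ⊗[k] ↥B) :=
  Submodule.span k
    {z : ↥A ⊗[k] ↥B | ∃ (a : ↥A) (d : ↥D) (b : ↥B) (a' : ↥A) (b' : ↥B),
      (a' : R) = (a : R) * (d : R) ∧ ((b' : R) = (d : R) * (b : R)) ∧
      z = a' ⊗ₜ[k] b - a ⊗ₜ[k] b'}

/-- The balanced tensor product `A ⊗_D B`, realised as a quotient of `↥A ⊗[k] ↥B`. -/
noncomputable abbrev balancedTensor (A B D : Submodule k R) : Type _ :=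
  @HasQuotient.Quotient _ _ (@Submodule.hasQuotient k (↥A ⊗[k] ↥B) _ _ _) (balancedRel A B D)

/-- The `k`-linear map `A ⊗_D B → R`, `r₁ ⊗ r₂ ↦ r₁ r₂`, induced by multiplication in `R`
on the balanced tensor product. -/
noncomputable def mulQuot (A B D : Submodule k R) : balancedTensor A B D →ₗ[k] R :=
  Submodule.liftQ _ (mulTensor A B)
    (by
      rw [balancedRel, Submodule.span_le]
      rintro z ⟨a, d, b, a', b', ha', hb', rfl⟩
      simp only [SetLike.mem_coe, LinearMap.mem_ker, map_sub, mulTensor_tmul, ha', hb']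
      rw [mul_assoc, sub_self])

/-!
Full grading gives `1 ∈ R_g R_{g⁻¹}`, say `1 = ∑ uᵢ vᵢ` with `uᵢ ∈ R_g`, `vᵢ ∈ R_{g⁻¹}`.
Left multiplication by `vᵢ` maps `R_{[g ʰH]}` into `R_{[ʰH]}` and `R_{[ghH]}` into `R_{[hH]}`,
so `c ↦ ∑ uᵢ ⊗ vᵢ c` is defined on `R_{[ghH]}`, and balancedness gives
`∑ uᵢ ⊗ vᵢ x y = ∑ uᵢ vᵢ x ⊗ y = x ⊗ y`: it is a left inverse of multiplication.
The image is `R_{[g ʰH]} R_{[hH]} = R_{[g ʰH h H]} = R_{[ghH]}`.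
-/

section BalancedTensor

variable (A B D : Submodule k R)

theorem mulTensor_eq_mulMap : mulTensor A B = Submodule.mulMap A B :=
  TensorProduct.ext' fun _ _ => rfl

theorem range_mulQuot : LinearMap.range (mulQuot A B D) = A * B := by
  rw [mulQuot, Submodule.range_liftQ, mulTensor_eq_mulMap, Submodule.mulMap_range]

variable {A B D}

theorem mk_tmul_eq_mk_tmul_of_mul {a a' : A} {b b' : B} {d : R} (hd : d ∈ D)
    (ha : (a' : R) = a * d) (hb : (b' : R) = d * b) :
    (Submodule.Quotient.mk (a' ⊗ₜ[k] b) : balancedTensor A B D) =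
      Submodule.Quotient.mk (a ⊗ₜ[k] b') :=
  (Submodule.Quotient.eq _).2 <| Submodule.subset_span ⟨a, ⟨d, hd⟩, b, a', b', ha, hb, rfl⟩

theorem mulQuot_injective_of_one_mem_mul {U V : Submodule k R} (hUA : U ≤ A)
    (hAD : A * D ≤ A) (hVA : V * A ≤ D) (hVAB : V * (A * B) ≤ B) (hone : (1 : R) ∈ U * V) :
    Function.Injective (mulQuot A B D) := by
  obtain ⟨t, ht⟩ : (1 : R) ∈ LinearMap.range (Submodule.mulMap U V) := by
    rwa [Submodule.mulMap_range]
  obtain ⟨S, rfl⟩ := TensorProduct.exists_finset t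
  have hS : ∑ p ∈ S, (p.1 : R) * p.2 = 1 := by
    simpa only [map_sum, Submodule.mulMap_tmul] using ht
  let μ : balancedTensor A B D →ₗ[k] ↥(A * B) :=
    (mulQuot A B D).codRestrict _ fun q => range_mulQuot A B D ▸ LinearMap.mem_range_self _ q
  let ψ : ↥(A * B) →ₗ[k] balancedTensor A B D := ∑ p ∈ S,
    (Submodule.mkQ _ : ↥A ⊗[k] ↥B →ₗ[k] balancedTensor A B D) ∘ₗ
      TensorProduct.mk k ↥A ↥B ⟨p.1, hUA p.1.2⟩ ∘ₗ
      ((LinearMap.mulLeft k (p.2 : R)) ∘ₗ (A * B).subtype).codRestrict B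
        fun c => hVAB (Submodule.mul_mem_mul p.2.2 c.2)
  have hψμ : ψ ∘ₗ μ = LinearMap.id := by
    refine Submodule.linearMap_qext _ (TensorProduct.ext' fun x y => ?_)
    have hvx (p : U × V) : (p.2 : R) * x ∈ D := hVA (Submodule.mul_mem_mul p.2.2 x.2)
    have hux (p : U × V) : (p.1 : R) * (p.2 * x) ∈ A :=
      hAD (Submodule.mul_mem_mul (hUA p.1.2) (hvx p))
    have hvxy (p : U × V) : (p.2 : R) * (x * y) ∈ B :=
      hVAB (Submodule.mul_mem_mul p.2.2 (Submodule.mul_mem_mul x.2 y.2))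
    have hx : ∑ p ∈ S, (⟨_, hux p⟩ : A) = x := by
      ext
      simp only [AddSubmonoidClass.coe_finsetSum, ← mul_assoc, ← Finset.sum_mul, hS, one_mul]
    calc (ψ ∘ₗ μ) (Submodule.Quotient.mk (x ⊗ₜ y))
        = ∑ p ∈ S, Submodule.Quotient.mk (⟨p.1, hUA p.1.2⟩ ⊗ₜ[k] ⟨_, hvxy p⟩) := by
          simp only [ψ, LinearMap.comp_apply, LinearMap.sum_apply]
          rfl
      _ = ∑ p ∈ S, Submodule.Quotient.mk (⟨_, hux p⟩ ⊗ₜ[k] y) :=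
          Finset.sum_congr rfl fun p _ =>
            (mk_tmul_eq_mk_tmul_of_mul (hvx p) rfl (mul_assoc _ _ _).symm).symm
      _ = Submodule.Quotient.mk ((∑ p ∈ S, (⟨_, hux p⟩ : A)) ⊗ₜ[k] y) := by
          rw [TensorProduct.sum_tmul]
          exact (map_sum (Submodule.mkQ _ : ↥A ⊗[k] ↥B →ₗ[k] balancedTensor A B D) _ S).symm
      _ = Submodule.Quotient.mk (x ⊗ₜ y) := by rw [hx]
  have hinv : Function.LeftInverse ψ μ := LinearMap.congr_fun hψμ
  exact fun q q' h => hinv.injective (Subtype.ext h)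

end BalancedTensor

theorem gradedPart_singleton (𝒜 : G → Submodule k R) (a : G) :
    gradedPart 𝒜 ({a} : Set G) = 𝒜 a :=
  le_antisymm (iSup_le <| by rintro ⟨_, rfl⟩; exact le_rfl) (le_gradedPart 𝒜 rfl)

section Graded

variable {𝒜 : G → Submodule k R}

theorem gradedPart_mul_gradedPart (hmul : ∀ a b : G, 𝒜 a * 𝒜 b = 𝒜 (a * b)) (S T : Set G) :
    gradedPart 𝒜 S * gradedPart 𝒜 T = gradedPart 𝒜 (S * T) := by
  refine le_antisymm (gradedPart_mul_le 𝒜 (fun a b => (hmul a b).le) S T) (iSup_le ?_)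
  rintro ⟨_, s, hs, t, ht, rfl⟩
  rw [← hmul]
  exact mul_le_mul' (le_gradedPart 𝒜 hs) (le_gradedPart 𝒜 ht)

theorem mul_gradedPart_singleton_mul (hmul : ∀ a b : G, 𝒜 a * 𝒜 b = 𝒜 (a * b))
    (a b : G) (S : Set G) :
    𝒜 a * gradedPart 𝒜 ({b} * S) = gradedPart 𝒜 ({a * b} * S) := by
  rw [← gradedPart_singleton 𝒜 a, gradedPart_mul_gradedPart hmul, ← mul_assoc,
    Set.singleton_mul_singleton]

end Graded

theorem conjSubgroup_mul_leftCoset (h : G) (H : Subgroup G) :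
    (conjSubgroup h H : Set G) * ({h} * H) = {h} * H := by
  rw [conjSubgroup_coe, mul_assoc _ {h⁻¹}, ← mul_assoc {h⁻¹}, Set.singleton_mul_singleton,
    inv_mul_cancel, Set.singleton_one, one_mul, mul_assoc, coe_mul_coe]

theorem mulQuot_conj_coset_bijective_general
    {𝒜 : G → Submodule k R} (hR : IsFullyGraded 𝒜) (H : Subgroup G) (g h : G) :
    Function.Injective (mulQuot (gradedPart 𝒜 ({g} * (conjSubgroup h H : Set G)))
      (gradedPart 𝒜 ({h} * (H : Set G))) (gradedPart 𝒜 (conjSubgroup h H : Set G))) ∧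
    LinearMap.range (mulQuot (gradedPart 𝒜 ({g} * (conjSubgroup h H : Set G)))
        (gradedPart 𝒜 ({h} * (H : Set G))) (gradedPart 𝒜 (conjSubgroup h H : Set G))) =
      gradedPart 𝒜 ({g * h} * (H : Set G)) := by
  set N := conjSubgroup h H
  have hmul := hR.mul_eq
  have hAB : gradedPart 𝒜 ({g} * (N : Set G)) * gradedPart 𝒜 ({h} * (H : Set G)) =
      gradedPart 𝒜 ({g * h} * (H : Set G)) := by
    rw [gradedPart_mul_gradedPart hmul, mul_assoc, conjSubgroup_mul_leftCoset, ← mul_assoc,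
      Set.singleton_mul_singleton]
  refine ⟨mulQuot_injective_of_one_mem_mul (U := 𝒜 g) (V := 𝒜 g⁻¹) ?_ ?_ ?_ ?_ ?_,
    by rw [range_mulQuot, hAB]⟩
  · rw [← gradedPart_singleton 𝒜 g]
    exact gradedPart_mono 𝒜 (Set.subset_mul_left _ N.one_mem)
  · rw [gradedPart_mul_gradedPart hmul, mul_assoc, coe_mul_coe]
  · rw [mul_gradedPart_singleton_mul hmul, inv_mul_cancel, Set.singleton_one, one_mul]
  · rw [hAB, mul_gradedPart_singleton_mul hmul, inv_mul_cancel_left]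
  · rw [hmul, mul_inv_cancel]
    exact hR.one_mem

/-- Let `k` be a field, `G` a finite group, `R` a fully `G`-graded
`k`-algebra, `H ≤ G` and `g, h ∈ G`; write `ʰH = h H h⁻¹`.  Then multiplication in `R`
induces an isomorphism `R_{[g(ʰH)]} ⊗_{R_{[ʰH]}} R_{[hH]} ≅ R_{[ghH]}` of
`R_{[ᵍʰH]}`–`R_H`-bimodules; in particular the `k`-linear map `r₁ ⊗ r₂ ↦ r₁ r₂` on the
balanced tensor product is injective with image exactly `R_{[ghH]}`. -/
theorem mulQuot_conj_coset_bijective [Finite G]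
    {𝒜 : G → Submodule k R} (hR : IsFullyGraded 𝒜) (H : Subgroup G) (g h : G) :
    Function.Injective (mulQuot (gradedPart 𝒜 ({g} * (conjSubgroup h H : Set G)))
      (gradedPart 𝒜 ({h} * (H : Set G))) (gradedPart 𝒜 (conjSubgroup h H : Set G))) ∧
    LinearMap.range (mulQuot (gradedPart 𝒜 ({g} * (conjSubgroup h H : Set G)))
        (gradedPart 𝒜 ({h} * (H : Set G))) (gradedPart 𝒜 (conjSubgroup h H : Set G))) =
      gradedPart 𝒜 ({g * h} * (H : Set G)) :=
  mulQuot_conj_coset_bijective_general hR H g h
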